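/- arXiv:2502.16639 — 2 statements merged into one kernel-verified Lean document; each statement's English description precedes it below -/
import Mathlib

section
/- Let n > m > 1 be real, A > 0 and Δ > 0, and set a = 2AΔ/(1+Δ) and b = 2A/(1+Δ). Then the f_{nm}-energy per particle of the bipartite chain satisfies (1/2)·Σ_{j∈ℤ, j≠0} f_{nm}(2jA) + (1/4)·Σ_{j∈ℤ} ( f_{nm}(a+2jA) + f_{nm}(b+2jA) ) = (1/(n−m))·( m·U(n,A,Δ) − n·U(m,A,Δ) ), where U(s,A,Δ) = (2A)^{−s}·ζ(s) + (1/(2(2A)^s))·( ζ(s, Δ/(1+Δ)) + ζ(s, 1/(1+Δ)) ). -/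
/-!
Writing `f_{nm}(r) = (m|r|^{-n} - n|r|^{-m})/(n-m)` reduces everything to Riesz sums
`Σ_{j∈ℤ} |c + jL|^{-s}` over shifted lattices with period `L = 2A`. Splitting `j ≥ 0` from
`j < 0` and factoring out `L^{-s}` turns such a sum into `L^{-s}(ζ(s, c/L) + ζ(s, 1 - c/L))`;
the chain itself is `c = 0` (where `ζ(s, 0)` is `ζ(s)`), and the shifts `c = a` and `c = b`
both give `ζ(s, Δ/(1+Δ)) + ζ(s, 1/(1+Δ))`.
-/

open Real Filter

/-- The Riemann zeta function `ζ(s) = Σ_{j=1}^∞ j^{-s}` for real `s > 1`. -/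
noncomputable def rzeta (s : ℝ) : ℝ := ∑' j : ℕ, ((j : ℝ) + 1) ^ (-s)

/-- The Hurwitz zeta function `ζ(s,q) = Σ_{j=0}^∞ (j+q)^{-s}` for real `s > 1`, `q > 0`. -/
noncomputable def hzeta (s q : ℝ) : ℝ := ∑' j : ℕ, ((j : ℝ) + q) ^ (-s)

/-- The Mie potential `f_{nm}(r) = (1/(n−m))·(m/|r|^n − n/|r|^m)` for `r ≠ 0`. -/
noncomputable def Mie (n m r : ℝ) : ℝ := (1 / (n - m)) * (m / |r| ^ n - n / |r| ^ m)

/-- The Riesz energy per particle of the bipartite chain,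
`U(s,A,Δ) = (2A)^{-s}·ζ(s) + (1/(2(2A)^s))·(ζ(s,Δ/(1+Δ)) + ζ(s,1/(1+Δ)))`. -/
noncomputable def U (s A Δ : ℝ) : ℝ :=
  (2 * A) ^ (-s) * rzeta s +
    (1 / (2 * (2 * A) ^ s)) * (hzeta s (Δ / (1 + Δ)) + hzeta s (1 / (1 + Δ)))

/-- The Riesz energy `Σ_{j∈ℤ} |c + jL|^{-s}` of the shifted lattice `c + Lℤ`, for
`0 ≤ c < L`. -/
noncomputable def latticeRiesz (s L c : ℝ) : ℝ :=
  L ^ (-s) * (hzeta s (c / L) + hzeta s (1 - c / L))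

lemma summable_nat_add_rpow_neg {s q : ℝ} (hs : 1 < s) (hq : 0 ≤ q) :
    Summable fun j : ℕ => ((j : ℝ) + q) ^ (-s) := by
  refine ((summable_one_div_nat_add_rpow q s).2 hs).congr fun j => ?_
  rw [abs_of_nonneg (by positivity), rpow_neg (by positivity), one_div]

lemma hasSum_hzeta {s q : ℝ} (hs : 1 < s) (hq : 0 ≤ q) :
    HasSum (fun j : ℕ => ((j : ℝ) + q) ^ (-s)) (hzeta s q) :=
  (summable_nat_add_rpow_neg hs hq).hasSum

-- `Real.rpow` has `0 ^ (-s) = 0`, so the zeroth term of `ζ(s, 0)` vanishes.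
lemma hzeta_zero {s : ℝ} (hs : 1 < s) : hzeta s 0 = rzeta s := by
  rw [hzeta, (summable_nat_add_rpow_neg hs le_rfl).tsum_eq_zero_add]
  simp [rzeta, zero_rpow (by linarith : -s ≠ 0)]

-- For `c = 0` the term `j = 0` is `0 ^ (-s) = 0`.
lemma hasSum_abs_add_int_mul_rpow_neg {s L c : ℝ} (hs : 1 < s) (hc : 0 ≤ c) (hcL : c < L) :
    HasSum (fun j : ℤ => |c + j * L| ^ (-s)) (latticeRiesz s L c) := by
  have hL : 0 < L := hc.trans_lt hcL
  have hq : c / L < 1 := (div_lt_one hL).2 hcL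
  rw [latticeRiesz, mul_add]
  refine HasSum.of_nat_of_neg_add_one ?_ ?_
  · refine ((hasSum_hzeta hs (by positivity)).mul_left (L ^ (-s))).congr_fun fun j => ?_
    have hj : c + ((j : ℤ) : ℝ) * L = L * (j + c / L) := by push_cast; field_simp; ring
    rw [hj, abs_of_nonneg (by positivity), mul_rpow hL.le (by positivity)]
  · refine ((hasSum_hzeta hs (by linarith)).mul_left (L ^ (-s))).congr_fun fun j => ?_
    have hj : c + ((-(j + 1) : ℤ) : ℝ) * L = -(L * (j + (1 - c / L))) := by
      push_cast; field_simp; ring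
    have hq' : 0 ≤ (j : ℝ) + (1 - c / L) := by positivity
    rw [hj, abs_neg, abs_of_nonneg (by positivity), mul_rpow hL.le hq']

lemma Mie_eq_rpow (n m r : ℝ) : Mie n m r = 1 / (n - m) * (m * |r| ^ (-n) - n * |r| ^ (-m)) := by
  rw [Mie, rpow_neg (abs_nonneg r), rpow_neg (abs_nonneg r)]
  ring

lemma Mie_zero {n m : ℝ} (hn : n ≠ 0) (hm : m ≠ 0) : Mie n m 0 = 0 := by
  simp [Mie, zero_rpow hn, zero_rpow hm]

lemma HasSum.Mie {ι : Type*} {f : ι → ℝ} {n m Sn Sm : ℝ}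
    (hn : HasSum (fun j => |f j| ^ (-n)) Sn) (hm : HasSum (fun j => |f j| ^ (-m)) Sm) :
    HasSum (fun j => Mie n m (f j)) (1 / (n - m) * (m * Sn - n * Sm)) := by
  simpa only [Mie_eq_rpow] using ((hn.mul_left m).sub (hm.mul_left n)).mul_left (1 / (n - m))

lemma hasSum_Mie_add_int_mul {n m L c : ℝ} (hn : 1 < n) (hm : 1 < m) (hc : 0 ≤ c)
    (hcL : c < L) :
    HasSum (fun j : ℤ => Mie n m (c + j * L))
      (1 / (n - m) * (m * latticeRiesz n L c - n * latticeRiesz m L c)) :=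
  (hasSum_abs_add_int_mul_rpow_neg hn hc hcL).Mie (hasSum_abs_add_int_mul_rpow_neg hm hc hcL)

lemma U_eq_latticeRiesz {s A Δ : ℝ} (hs : 1 < s) (hA : 0 < A) (hΔ : 0 < Δ) :
    U s A Δ = latticeRiesz s (2 * A) 0 / 2 +
      (latticeRiesz s (2 * A) (2 * A * Δ / (1 + Δ)) +
        latticeRiesz s (2 * A) (2 * A / (1 + Δ))) / 4 := by
  have hL : (0 : ℝ) < 2 * A := by positivity
  have hqa : 2 * A * Δ / (1 + Δ) / (2 * A) = Δ / (1 + Δ) := by field_simp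
  have hqb : 2 * A / (1 + Δ) / (2 * A) = 1 / (1 + Δ) := by field_simp
  have hqa' : 1 - Δ / (1 + Δ) = 1 / (1 + Δ) := by field_simp; ring
  have hqb' : 1 - 1 / (1 + Δ) = Δ / (1 + Δ) := by field_simp; ring
  simp only [latticeRiesz, hqa, hqb, hqa', hqb', zero_div, sub_zero, hzeta_zero hs]
  rw [U, rpow_neg hL.le, show hzeta s 1 = rzeta s from rfl]
  ring

/-- For `n > m > 1`, `A > 0`, `Δ > 0` and spacings `a = 2AΔ/(1+Δ)`,
`b = 2A/(1+Δ)`, the `f_{nm}`-energy per particle of the bipartite chain equals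
`(1/(n−m))·(m·U(n,A,Δ) − n·U(m,A,Δ))`. -/
theorem mie_energy_bipartite_chain
    (n m A Δ : ℝ) (hm : 1 < m) (hnm : m < n) (hA : 0 < A) (hΔ : 0 < Δ)
    (a b : ℝ) (ha : a = 2 * A * Δ / (1 + Δ)) (hb : b = 2 * A / (1 + Δ)) :
    (1 / 2) * (∑' j : {j : ℤ // j ≠ 0}, Mie n m (2 * (j.1 : ℝ) * A)) +
      (1 / 4) * (∑' j : ℤ, (Mie n m (a + 2 * (j : ℝ) * A) + Mie n m (b + 2 * (j : ℝ) * A))) =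
    (1 / (n - m)) * (m * U n A Δ - n * U m A Δ) := by
  have hn : 1 < n := hm.trans hnm
  have hΔ1 : 0 < 1 + Δ := by positivity
  have ha0 : 0 ≤ a := by rw [ha]; positivity
  have hb0 : 0 ≤ b := by rw [hb]; positivity
  have haL : a < 2 * A := by rw [ha, div_lt_iff₀ hΔ1]; nlinarith
  have hbL : b < 2 * A := by rw [hb, div_lt_iff₀ hΔ1]; nlinarith
  have E0 := hasSum_Mie_add_int_mul hn hm le_rfl (by positivity : (0 : ℝ) < 2 * A)
  have Eab := (hasSum_Mie_add_int_mul hn hm ha0 haL).add (hasSum_Mie_add_int_mul hn hm hb0 hbL)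
  have hperiod : ∀ j : ℤ, (j : ℝ) * (2 * A) = 2 * j * A := fun j => by ring
  simp only [zero_add, hperiod] at E0 Eab
  have hzero : (fun j : ℤ => Mie n m (2 * j * A)).support ⊆ {j | j ≠ 0} := by
    rintro j hj rfl
    exact hj (by simpa using Mie_zero (by linarith : n ≠ 0) (by linarith : m ≠ 0))
  have hsub : ∑' j : {j : ℤ // j ≠ 0}, Mie n m (2 * (j.1 : ℝ) * A) =
      ∑' j : ℤ, Mie n m (2 * j * A) :=
    tsum_subtype_eq_of_support_subset hzero
  rw [hsub, E0.tsum_eq, Eab.tsum_eq, U_eq_latticeRiesz hn hA hΔ, U_eq_latticeRiesz hm hA hΔ,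
    ← ha, ← hb]
  ring
end

section
/- Let m > 1 be fixed and A_c^{nm} = (1/2)·[ ((2^{2+n}−1)(1+n)ζ(n+2)) / ((2^{2+m}−1)(1+m)ζ(m+2)) ]^{1/(n−m)}. Then lim_{n→∞} A_c^{nm} = 1; in particular the hard-core limit of the critical inverse particle density is independent of m. -/
/-!
With `W s = (2^{2+s} - 1)(1+s) ζ(s+2)` (`mieWeight`) we have `A_c^{nm} = (W n / W m)^{1/(n-m)} / 2`.
Since `1 ≤ ζ(s+2) ≤ ζ(3)` for `s ≥ 1`, `2^{1+n} ≤ W n ≤ 2^{2+n} (1+n) ζ(3)`, so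
`log W n = n log 2 + O(log n)` and `log (W n / W m) / (n - m) → log 2`; exponentiating,
`(W n / W m)^{1/(n-m)} → 2`.
-/

open Real Filter Topology

lemma summable_rzeta_term {s : ℝ} (hs : 1 < s) :
    Summable (fun j : ℕ => ((j : ℝ) + 1) ^ (-s)) := by
  refine ((Real.summable_one_div_nat_add_rpow 1 s).mpr hs).congr fun j => ?_
  rw [abs_of_pos (by positivity), one_div, Real.rpow_neg (by positivity)]

lemma one_le_rzeta {s : ℝ} (hs : 1 < s) : 1 ≤ rzeta s := by
  have h := (summable_rzeta_term hs).le_tsum 0 fun j _ => by positivity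
  simpa [rzeta] using h

lemma rzeta_le_rzeta {s t : ℝ} (hs : 1 < s) (hst : s ≤ t) : rzeta t ≤ rzeta s :=
  (summable_rzeta_term (hs.trans_le hst)).tsum_le_tsum
    (fun j => Real.rpow_le_rpow_of_exponent_le (by simp) (by linarith))
    (summable_rzeta_term hs)

noncomputable def mieWeight (s : ℝ) : ℝ := (2 ^ (2 + s) - 1) * (1 + s) * rzeta (s + 2)

lemma two_rpow_le_mieWeight {s : ℝ} (hs : 0 ≤ s) : (2 : ℝ) ^ (1 + s) ≤ mieWeight s := by
  have h2 : (2 : ℝ) ^ (2 + s) = 2 * 2 ^ (1 + s) := by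
    rw [show (2 : ℝ) + s = 1 + (1 + s) by ring, Real.rpow_add two_pos, Real.rpow_one]
  have h1 : (1 : ℝ) ≤ 2 ^ (1 + s) := Real.one_le_rpow one_le_two (by linarith)
  have hz : 1 ≤ rzeta (s + 2) := one_le_rzeta (by linarith)
  have hfactor : (2 : ℝ) ^ (1 + s) ≤ 2 ^ (2 + s) - 1 := by linarith
  calc (2 : ℝ) ^ (1 + s) = 2 ^ (1 + s) * 1 * 1 := by ring
    _ ≤ (2 ^ (2 + s) - 1) * (1 + s) * rzeta (s + 2) :=
      mul_le_mul (mul_le_mul hfactor (by linarith) zero_le_one (by linarith)) hz zero_le_one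
        (mul_nonneg (by linarith) (by linarith))

lemma mieWeight_pos {s : ℝ} (hs : 0 ≤ s) : 0 < mieWeight s :=
  (Real.rpow_pos_of_pos two_pos _).trans_le (two_rpow_le_mieWeight hs)

lemma mieWeight_le {s : ℝ} (hs : 1 ≤ s) :
    mieWeight s ≤ 2 ^ (2 + s) * (1 + s) * rzeta 3 := by
  have h2 : (1 : ℝ) ≤ 2 ^ (2 + s) := Real.one_le_rpow one_le_two (by linarith)
  have hz : 1 ≤ rzeta (s + 2) := one_le_rzeta (by linarith)
  have hz3 : rzeta (s + 2) ≤ rzeta 3 := rzeta_le_rzeta (by norm_num) (by linarith)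
  unfold mieWeight
  gcongr
  linarith

lemma log_mieWeight_ge {s : ℝ} (hs : 0 ≤ s) : (1 + s) * log 2 ≤ log (mieWeight s) := by
  rw [← Real.log_rpow two_pos]
  exact Real.log_le_log (by positivity) (two_rpow_le_mieWeight hs)

lemma log_mieWeight_le {s : ℝ} (hs : 1 ≤ s) :
    log (mieWeight s) ≤ (2 + s) * log 2 + log (1 + s) + log (rzeta 3) := by
  have hz3 : 0 < rzeta 3 := one_pos.trans_le (one_le_rzeta (by norm_num))
  calc log (mieWeight s) ≤ log (2 ^ (2 + s) * (1 + s) * rzeta 3) :=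
        Real.log_le_log (mieWeight_pos (by linarith)) (mieWeight_le hs)
    _ = (2 + s) * log 2 + log (1 + s) + log (rzeta 3) := by
        rw [Real.log_mul (by positivity) hz3.ne', Real.log_mul (by positivity) (by linarith),
          Real.log_rpow two_pos]

section LimitsAlongShift

variable (m : ℝ)

lemma tendsto_const_div_sub_atTop (c : ℝ) :
    Tendsto (fun n : ℝ => c / (n - m)) atTop (𝓝 0) :=
  tendsto_const_nhds.div_atTop (tendsto_atTop_add_const_right _ (-m) tendsto_id)

lemma tendsto_add_div_sub_atTop (a : ℝ) :
    Tendsto (fun n : ℝ => (a + n) / (n - m)) atTop (𝓝 1) := by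
  have h := (tendsto_const_div_sub_atTop m (a + m)).const_add 1
  rw [add_zero] at h
  refine h.congr' ?_
  filter_upwards [eventually_gt_atTop m] with n hn
  field_simp [sub_ne_zero.mpr hn.ne']
  ring

lemma tendsto_log_one_add_div_sub_atTop :
    Tendsto (fun n : ℝ => log (1 + n) / (n - m)) atTop (𝓝 0) := by
  have h := (tendsto_pow_log_div_mul_add_atTop 1 (-1 - m) 1 one_ne_zero).comp
    (tendsto_atTop_add_const_left _ 1 tendsto_id)
  refine h.congr fun n => ?_
  simp only [Function.comp_apply, id, pow_one, one_mul]
  ring_nf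

lemma tendsto_log_mieWeight_div_sub_atTop :
    Tendsto (fun n : ℝ => log (mieWeight n) / (n - m)) atTop (𝓝 (log 2)) := by
  have hlower : Tendsto (fun n : ℝ => (1 + n) / (n - m) * log 2) atTop (𝓝 (log 2)) := by
    simpa using (tendsto_add_div_sub_atTop m 1).mul_const (log 2)
  have hupper : Tendsto (fun n : ℝ =>
      (2 + n) / (n - m) * log 2 + log (1 + n) / (n - m) + log (rzeta 3) / (n - m))
      atTop (𝓝 (log 2)) := by
    simpa using (((tendsto_add_div_sub_atTop m 2).mul_const (log 2)).add
      (tendsto_log_one_add_div_sub_atTop m)).add (tendsto_const_div_sub_atTop m _)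
  refine tendsto_of_tendsto_of_tendsto_of_le_of_le' hlower hupper ?_ ?_
  all_goals
    filter_upwards [eventually_gt_atTop m, eventually_ge_atTop 1] with n hnm hn
  · rw [div_mul_eq_mul_div]
    exact div_le_div_of_nonneg_right (log_mieWeight_ge (by linarith)) (by linarith)
  · rw [div_mul_eq_mul_div, ← add_div, ← add_div]
    exact div_le_div_of_nonneg_right (log_mieWeight_le hn) (by linarith)

end LimitsAlongShift

lemma tendsto_rpow_of_tendsto_log_mul {α : Type*} {l : Filter α} {f g : α → ℝ} {L : ℝ}
    (hf : ∀ᶠ x in l, 0 < f x) (h : Tendsto (fun x => log (f x) * g x) l (𝓝 L)) :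
    Tendsto (fun x => f x ^ g x) l (𝓝 (exp L)) :=
  ((continuous_exp.tendsto L).comp h).congr' <| by
    filter_upwards [hf] with x hx
    rw [Function.comp_apply, Real.rpow_def_of_pos hx]

/-- For fixed `m > 1`, the transition point
`A_c^{nm} = (1/2)·[((2^{2+n}−1)(1+n)ζ(n+2)) / ((2^{2+m}−1)(1+m)ζ(m+2))]^{1/(n−m)}`
satisfies `lim_{n→∞} A_c^{nm} = 1` (an `m`-independent hard-core limit). -/
theorem Ac_tendsto_one_hardcore_limit
    (m : ℝ) (hm : 1 < m) :
    Tendsto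
      (fun n : ℝ =>
        (1 / 2) * (((2 ^ (2 + n) - 1) * (1 + n) * rzeta (n + 2)) /
            ((2 ^ (2 + m) - 1) * (1 + m) * rzeta (m + 2))) ^ (1 / (n - m)))
      atTop (nhds 1) := by
  change Tendsto (fun n => 1 / 2 * (mieWeight n / mieWeight m) ^ (1 / (n - m))) atTop (𝓝 1)
  have hWm := mieWeight_pos (by linarith : 0 ≤ m)
  have hlog : Tendsto (fun n => log (mieWeight n / mieWeight m) * (1 / (n - m)))
      atTop (𝓝 (log 2)) := by
    have h := (tendsto_log_mieWeight_div_sub_atTop m).sub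
      (tendsto_const_div_sub_atTop m (log (mieWeight m)))
    rw [sub_zero] at h
    refine h.congr' ?_
    filter_upwards [eventually_ge_atTop 0] with n hn
    rw [Real.log_div (mieWeight_pos hn).ne' hWm.ne', mul_one_div, sub_div]
  have hroot := tendsto_rpow_of_tendsto_log_mul
    (eventually_ge_atTop 0 |>.mono fun n hn => div_pos (mieWeight_pos hn) hWm) hlog
  rw [Real.exp_log two_pos] at hroot
  simpa using hroot.const_mul (1 / 2 : ℝ)
end
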